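/- arXiv:2202.12769 — 2 statements merged into one kernel-verified Lean document; each statement's English description precedes it below -/
import Mathlib

section
/- Maximizing the likelihood ∏_{e∈E} σ(a_v(e)) · ∏_{e∈E'} (1-σ(a_v(e))) over a parameter v ranging in a finite set is equivalent to maximizing ∑_{e∈E} a_v(e): a value v₀ maximizes the first expression if and only if it maximizes the second. -/
/-!
The logistic function satisfies `σ t = exp t * (1 - σ t)`. Applying this on `E` turns the
likelihood of `v` into `exp (∑ e ∈ E, a v e) * ∏ e ∈ U, (1 - σ (a v e))`, and the second factor
is a positive constant by assumption, so the likelihood is a strictly increasing function of the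
sum.
-/

open Finset Real

lemma Real.sigmoid_eq_exp_mul_one_sub_sigmoid (t : ℝ) : sigmoid t = exp t * (1 - sigmoid t) := by
  rw [← sigmoid_neg, ← sigmoid_mul_rexp_neg, mul_left_comm, ← exp_add, add_neg_cancel, exp_zero,
    mul_one]

lemma Finset.prod_mul_prod_sdiff_of_eq_mul {ι M : Type*} [DecidableEq ι] [CommMonoid M]
    {U E : Finset ι} (hE : E ⊆ U) {f c g : ι → M} (h : ∀ e ∈ E, f e = c e * g e) :
    (∏ e ∈ E, f e) * ∏ e ∈ U \ E, g e = (∏ e ∈ E, c e) * ∏ e ∈ U, g e := by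
  rw [prod_congr rfl h, prod_mul_distrib, mul_assoc, mul_comm (∏ e ∈ E, g e), prod_sdiff hE]

theorem max_likelihood_iff_max_sum_general {ι P : Type*} [DecidableEq ι]
    (σ : ℝ → ℝ) (hσ : ∀ t : ℝ, σ t = 1 / (1 + Real.exp (-t)))
    (U E : Finset ι) (hE : E ⊆ U) (a : P → ι → ℝ)
    (hindep : ∀ v w : P, (∏ e ∈ U, (1 - σ (a v e))) = ∏ e ∈ U, (1 - σ (a w e)))
    (v₀ : P) :
    (∀ v : P,
        (∏ e ∈ E, σ (a v e)) * (∏ e ∈ U \ E, (1 - σ (a v e)))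
          ≤ (∏ e ∈ E, σ (a v₀ e)) * (∏ e ∈ U \ E, (1 - σ (a v₀ e))))
      ↔ (∀ v : P, (∑ e ∈ E, a v e) ≤ ∑ e ∈ E, a v₀ e) := by
  obtain rfl : σ = sigmoid := funext fun t ↦ by rw [hσ, one_div, sigmoid_def]
  have hlikelihood : ∀ v, (∏ e ∈ E, sigmoid (a v e)) * ∏ e ∈ U \ E, (1 - sigmoid (a v e)) =
      exp (∑ e ∈ E, a v e) * ∏ e ∈ U, (1 - sigmoid (a v₀ e)) := fun v ↦ by
    rw [prod_mul_prod_sdiff_of_eq_mul hE fun e _ ↦ sigmoid_eq_exp_mul_one_sub_sigmoid _, exp_sum,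
      hindep v v₀]
  have hconst : 0 < ∏ e ∈ U, (1 - sigmoid (a v₀ e)) :=
    prod_pos fun e _ ↦ sub_pos.2 (sigmoid_lt_one _)
  simp only [hlikelihood, mul_le_mul_iff_left₀ hconst, exp_le_exp]

/-- Maximum-likelihood equivalence (Theorem 3.1): assuming ∏_{e∈U}(1-σ(a_v(e)))
    is independent of v, a parameter v₀ maximizes the likelihood
    ∏_{e∈E} σ(a_v(e)) · ∏_{e∈U\E} (1-σ(a_v(e))) over the finite index set P
    if and only if it maximizes ∑_{e∈E} a_v(e). -/
theorem max_likelihood_iff_max_sum {ι P : Type*} [DecidableEq ι] [Fintype P]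
    (σ : ℝ → ℝ) (hσ : ∀ t : ℝ, σ t = 1 / (1 + Real.exp (-t)))
    (U E : Finset ι) (hE : E ⊆ U) (a : P → ι → ℝ)
    (hindep : ∀ v w : P, (∏ e ∈ U, (1 - σ (a v e))) = ∏ e ∈ U, (1 - σ (a w e)))
    (v₀ : P) :
    (∀ v : P,
        (∏ e ∈ E, σ (a v e)) * (∏ e ∈ U \ E, (1 - σ (a v e)))
          ≤ (∏ e ∈ E, σ (a v₀ e)) * (∏ e ∈ U \ E, (1 - σ (a v₀ e))))
      ↔ (∀ v : P, (∑ e ∈ E, a v e) ≤ ∑ e ∈ E, a v₀ e) :=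
  max_likelihood_iff_max_sum_general σ hσ U E hE a hindep v₀
end

section
/- For z ∈ ℝⁿ with strictly positive entries, q > 1, a finite family E of nonempty subsets of {1,…,n}, and positive weights ξ(e), define F(z)_i = z_i^{q−1} ∑_{e: i∈e} ξ(e) (∑_{k∈e} z_k^q)^{1/q−1}. Then for each i, |∑_j (∂F(z)_i/∂z_j) z_j| ≤ |q−1| · F(z)_i; equivalently, the logarithmic derivative of F along the scaling direction is bounded: |(DF(z)z)_i / F(z)_i| ≤ |q−1|. -/
/-- Logarithmic derivative bound along the scaling direction (eq. lip_2):
    for F(z)_i = z_i^{q−1} ∑_{e∋i} ξ(e)(∑_{k∈e} z_k^q)^{1/q−1} and z ≻ 0,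
    |(DF(z) z)_i| = |∑_j (∂F_i/∂z_j)(z) z_j| ≤ |q−1| · F(z)_i. -/
theorem log_derivative_scaling_bound {n : ℕ}
    (E : Finset (Finset (Fin n))) (hE : ∀ e ∈ E, e.Nonempty)
    (hcover : ∀ i : Fin n, ∃ e ∈ E, i ∈ e)
    (ξ : Finset (Fin n) → ℝ) (hξ : ∀ e ∈ E, 0 < ξ e)
    (q : ℝ) (hq : 1 < q)
    (F : (Fin n → ℝ) → Fin n → ℝ)
    (hF : ∀ z : Fin n → ℝ, ∀ i : Fin n,
      F z i = z i ^ (q - 1) *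
        ∑ e ∈ E.filter (fun e => i ∈ e), ξ e * (∑ k ∈ e, z k ^ q) ^ (1 / q - 1))
    (z : Fin n → ℝ) (hz : ∀ i, 0 < z i) (i : Fin n) :
    |fderiv ℝ (fun w => F w i) z z| ≤ |q - 1| * F z i := by
  have hq0 : (0:ℝ) < q := lt_trans one_pos hq
  set g : (Fin n → ℝ) → ℝ := fun w => w i ^ (q - 1) *
      ∑ e ∈ E.filter (fun e => i ∈ e), ξ e * (∑ k ∈ e, w k ^ q) ^ (1 / q - 1) with hg
  have hgF : (fun w => F w i) = g := funext fun w => hF w i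
  have hFnn : 0 ≤ F z i := by
    rw [hF]
    apply mul_nonneg (Real.rpow_nonneg (hz i).le _)
    refine Finset.sum_nonneg fun e he => ?_
    exact mul_nonneg (hξ e (Finset.mem_filter.mp he).1).le
      (Real.rpow_nonneg (Finset.sum_nonneg fun k _ => Real.rpow_nonneg (hz k).le _) _)
  -- differentiability of g at z
  have hdiff : DifferentiableAt ℝ g z := by
    apply DifferentiableAt.mul
    · exact DifferentiableAt.rpow_const
        ((ContinuousLinearMap.proj i : (Fin n → ℝ) →L[ℝ] ℝ).differentiableAt)
        (Or.inl (hz i).ne')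
    · refine DifferentiableAt.fun_sum fun e he => ?_
      have heE := (Finset.mem_filter.mp he).1
      have hS : 0 < ∑ k ∈ e, z k ^ q :=
        Finset.sum_pos (fun k _ => Real.rpow_pos_of_pos (hz k) q) (hE e heE)
      refine DifferentiableAt.const_mul ?_ _
      refine DifferentiableAt.rpow_const ?_ (Or.inl hS.ne')
      exact DifferentiableAt.fun_sum fun k _ => DifferentiableAt.rpow_const
        ((ContinuousLinearMap.proj k : (Fin n → ℝ) →L[ℝ] ℝ).differentiableAt)
        (Or.inl (hz k).ne')
  -- homogeneity of degree 0
  have hhom : ∀ t : ℝ, 0 < t → g (t • z) = g z := by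
    intro t ht
    have ht' := ht.le
    simp only [hg, Pi.smul_apply, smul_eq_mul]
    have hS : ∀ e ∈ E.filter (fun e => i ∈ e),
        ξ e * (∑ k ∈ e, (t * z k) ^ q) ^ (1 / q - 1)
          = t ^ (1 - q) * (ξ e * (∑ k ∈ e, z k ^ q) ^ (1 / q - 1)) := by
      intro e he
      have h1 : ∑ k ∈ e, (t * z k) ^ q = t ^ q * ∑ k ∈ e, z k ^ q := by
        rw [Finset.mul_sum]
        exact Finset.sum_congr rfl fun k _ => Real.mul_rpow ht' (hz k).le
      rw [h1, Real.mul_rpow (Real.rpow_nonneg ht' q)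
          (Finset.sum_nonneg fun k _ => Real.rpow_nonneg (hz k).le q),
        ← Real.rpow_mul ht', show q * (1 / q - 1) = 1 - q by field_simp]
      ring
    rw [Finset.sum_congr rfl hS, ← Finset.mul_sum, Real.mul_rpow ht' (hz i).le]
    have htt : t ^ (q - 1) * t ^ (1 - q) = 1 := by
      rw [← Real.rpow_add ht, show q - 1 + (1 - q) = 0 by ring, Real.rpow_zero]
    linear_combination (z i ^ (q - 1) *
      ∑ e ∈ E.filter (fun e => i ∈ e), ξ e * (∑ k ∈ e, z k ^ q) ^ (1 / q - 1)) * htt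
  -- directional derivative along z
  have hc : HasDerivAt (fun t : ℝ => (1 + t) • z) z 0 := by
    simpa using ((hasDerivAt_id (0:ℝ)).const_add 1).smul_const z
  have hcomp : HasDerivAt (fun t : ℝ => g ((1 + t) • z)) (fderiv ℝ g z z) 0 := by
    have h1 : (1 + (0:ℝ)) • z = z := by simp
    have h2 : HasFDerivAt g (fderiv ℝ g z) ((1 + (0:ℝ)) • z) := by
      rw [h1]; exact hdiff.hasFDerivAt
    exact h2.comp_hasDerivAt 0 hc
  have heq : (fun t : ℝ => g ((1 + t) • z)) =ᶠ[nhds (0:ℝ)] fun _ => g z := by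
    filter_upwards [Ioo_mem_nhds (by norm_num : (-1:ℝ) < 0) one_pos] with t ht
    exact hhom (1 + t) (by linarith [ht.1])
  have hzero : fderiv ℝ g z z = 0 :=
    hcomp.unique ((hasDerivAt_const (0:ℝ) (g z)).congr_of_eventuallyEq heq)
  rw [hgF, hzero]
  simpa using mul_nonneg (abs_nonneg (q - 1)) hFnn
end
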